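/- arXiv:2106.00452 — 4 statements merged into one kernel-verified Lean document; each statement's English description precedes it below -/
import Mathlib

section
/- In a connected labeled digraph G over alphabet A, if ≡₁ is a group-preserving equivalence relation on the vertices of G and ≡₂ is an equivalence relation contained in ≡₁, then ≡₂ is also group-preserving. -/
open List

section Prelude

variable {A V : Type*}

structure LDigraph (V A : Type*) where
  E : Set (V × A × V)

namespace LDigraph

inductive Step (G : LDigraph V A) : V → V → FreeGroup A → Prop
  | fwd {x a y} : (x, a, y) ∈ G.E → Step G x y (FreeGroup.of a)
  | bwd {x a y} : (x, a, y) ∈ G.E → Step G y x (FreeGroup.of a)⁻¹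

inductive PathLabel (G : LDigraph V A) : V → V → FreeGroup A → Prop
  | nil (x) : PathLabel G x x 1
  | cons {x y z g h} : G.Step x y g → PathLabel G y z h → PathLabel G x z (g * h)

inductive PosPath (G : LDigraph V A) : V → V → List A → Prop
  | nil (x) : PosPath G x x []
  | cons {x a y z w} : (x, a, y) ∈ G.E → PosPath G y z w → PosPath G x z (a :: w)

def loopLabels (G : LDigraph V A) (x : V) : Set (FreeGroup A) :=
  {g | G.PathLabel x x g}

def Connected (G : LDigraph V A) : Prop :=
  ∀ x y : V, ∃ g, G.PathLabel x y g

def quot (G : LDigraph V A) (r : Setoid V) : LDigraph (Quotient r) A :=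
  ⟨{e | ∃ x a y, (x, a, y) ∈ G.E ∧ e = (Quotient.mk r x, a, Quotient.mk r y)}⟩

def GroupPreserving (G : LDigraph V A) (r : Setoid V) : Prop :=
  ∀ x : V, G.loopLabels x = (G.quot r).loopLabels (Quotient.mk r x)

end LDigraph

/-- The image of a word in the free group. -/
def wordToFG (w : List A) : FreeGroup A := (w.map FreeGroup.of).prod

def FactorClosed (L : Set (List A)) : Prop := ∀ w ∈ L, ∀ u : List A, u <:+: w → u ∈ L

def Recurrent (L : Set (List A)) : Prop :=
  FactorClosed L ∧ ∀ u ∈ L, ∀ v ∈ L, ∃ w : List A, w ≠ [] ∧ u ++ w ++ v ∈ L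

def UniformlyRecurrent (L : Set (List A)) : Prop :=
  FactorClosed L ∧ ∀ u ∈ L, ∃ N : ℕ, ∀ w ∈ L, N ≤ w.length → u <:+: w

/-- The Rauzy graph `G_{m,k}`: vertices are the words of `L` of length `m`, and every
word `x ∈ L` of length `m+1` gives an edge from `init x` to `tail x` labeled `x(k)`. -/
def rauzy (L : Set (List A)) (m k : ℕ) : LDigraph (List A) A :=
  ⟨{e | ∃ x a, x ∈ L ∧ x.length = m + 1 ∧ x[k]? = some a ∧ e = (x.dropLast, a, x.tail)}⟩

/-- The extension graph `E(w)`, a bipartite graph on two copies of `A`. -/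
def extGraph (L : Set (List A)) (w : List A) : SimpleGraph (A ⊕ A) where
  Adj x y := ∃ a b, a :: (w ++ [b]) ∈ L ∧
    ((x = Sum.inl a ∧ y = Sum.inr b) ∨ (x = Sum.inr b ∧ y = Sum.inl a))
  symm := by constructor; rintro x y ⟨a, b, h, hc⟩; exact ⟨a, b, h, by tauto⟩
  loopless := by
    constructor; rintro x ⟨a, b, h, ⟨h1, h2⟩ | ⟨h1, h2⟩⟩ <;> rw [h1] at h2 <;> exact absurd h2 (by simp)

/-- The set of genuine vertices of the extension graph of `w`. -/
def extVerts (L : Set (List A)) (w : List A) : Set (A ⊕ A) :=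
  Sum.elim (fun a => a :: w ∈ L) (fun b => w ++ [b] ∈ L)

/-- The extension graph of `w` is connected (all genuine vertices are mutually reachable). -/
def ExtConnected (L : Set (List A)) (w : List A) : Prop :=
  ∀ x ∈ extVerts L w, ∀ y ∈ extVerts L w, (extGraph L w).Reachable x y

/-- The extension graph of order `(d,d)` of the word `y`. -/
def extGraphK (L : Set (List A)) (d : ℕ) (y : List A) : SimpleGraph (List A ⊕ List A) where
  Adj p q := ∃ u v : List A, u.length = d ∧ v.length = d ∧ u ++ y ++ v ∈ L ∧
    ((p = Sum.inl u ∧ q = Sum.inr v) ∨ (p = Sum.inr v ∧ q = Sum.inl u))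
  symm := by constructor; rintro p q ⟨u, v, h1, h2, h3, hc⟩; exact ⟨u, v, h1, h2, h3, by tauto⟩
  loopless := by
    constructor; rintro p ⟨u, v, _, _, _, ⟨h1, h2⟩ | ⟨h1, h2⟩⟩ <;> rw [h1] at h2 <;> exact absurd h2 (by simp)

/-- A language is suffix-connected if for every nonempty word `w ∈ L` there exists a depth
`1 ≤ d ≤ |w|+1` such that the natural embedding of the left extensions of `w` in the
extension graph `E_{d,d}(tail^{d-1} w)` lies in a single connected component. -/
def SuffixConnected (L : Set (List A)) : Prop :=
  ∀ w ∈ L, w ≠ [] → ∃ d : ℕ, 1 ≤ d ∧ d ≤ w.length + 1 ∧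
    ∀ a b : A, a :: w ∈ L → b :: w ∈ L →
      (extGraphK L d (w.drop (d - 1))).Reachable
        (Sum.inl (a :: w.take (d - 1))) (Sum.inl (b :: w.take (d - 1)))

open Classical in
/-- The number of occurrences of `u` in `w`. -/
noncomputable def occCount (u w : List A) : ℕ :=
  (List.range (w.length + 1)).countP fun i => decide (u <+: w.drop i)

/-- The return set `R_{u,v}`. -/
noncomputable def ReturnSet (L : Set (List A)) (u v : List A) : Set (List A) :=
  {r | r ∈ L ∧ u ++ r ++ v ∈ L ∧ (u ++ v) <+: (u ++ r ++ v) ∧ (u ++ v) <:+ (u ++ r ++ v) ∧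
    occCount (u ++ v) (u ++ r ++ v) = 2}

end Prelude

/-! Loop labels can only grow along a map of vertices that sends edges to edges, and
`G → G/≡₂ → G/≡₁` are two such maps. When `≡₁` is group-preserving the groups at the two
ends coincide, so the group of `G/≡₂` is squeezed between them. -/

namespace LDigraph

variable {V W A : Type*}

theorem PathLabel.map {G : LDigraph V A} {H : LDigraph W A} (f : V → W)
    (hf : ∀ x a y, (x, a, y) ∈ G.E → (f x, a, f y) ∈ H.E) {x y : V} {g : FreeGroup A}
    (h : G.PathLabel x y g) : H.PathLabel (f x) (f y) g := by
  induction h with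
  | nil => exact .nil _
  | cons step _ ih =>
    cases step with
    | fwd he => exact .cons (.fwd (hf _ _ _ he)) ih
    | bwd he => exact .cons (.bwd (hf _ _ _ he)) ih

theorem loopLabels_subset_of_map {G : LDigraph V A} {H : LDigraph W A} (f : V → W)
    (hf : ∀ x a y, (x, a, y) ∈ G.E → (f x, a, f y) ∈ H.E) (x : V) :
    G.loopLabels x ⊆ H.loopLabels (f x) :=
  fun _ => PathLabel.map f hf

theorem loopLabels_subset_quot (G : LDigraph V A) (r : Setoid V) (x : V) :
    G.loopLabels x ⊆ (G.quot r).loopLabels (Quotient.mk r x) :=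
  loopLabels_subset_of_map (H := G.quot r) (Quotient.mk r)
    (fun x a y he => ⟨x, a, y, he, rfl⟩) x

theorem quot_loopLabels_subset_of_le (G : LDigraph V A) {r s : Setoid V} (hle : r ≤ s) (x : V) :
    (G.quot r).loopLabels (Quotient.mk r x) ⊆ (G.quot s).loopLabels (Quotient.mk s x) := by
  refine loopLabels_subset_of_map (Quotient.map' id hle) ?_ (Quotient.mk r x)
  rintro _ _ _ ⟨x, a, y, he, h⟩
  simp only [Prod.mk.injEq] at h
  obtain ⟨rfl, rfl, rfl⟩ := h
  exact ⟨x, _, y, he, rfl⟩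

end LDigraph

theorem groupPreserving_of_le_general {V A : Type*} (G : LDigraph V A)
    (r₁ r₂ : Setoid V) (hsub : ∀ x y : V, r₂.r x y → r₁.r x y)
    (h₁ : G.GroupPreserving r₁) : G.GroupPreserving r₂ := fun x =>
  (G.loopLabels_subset_quot r₂ x).antisymm <| by
    calc (G.quot r₂).loopLabels (Quotient.mk r₂ x)
        ⊆ (G.quot r₁).loopLabels (Quotient.mk r₁ x) :=
          G.quot_loopLabels_subset_of_le (fun x y => hsub x y) x
      _ = G.loopLabels x := (h₁ x).symm

/-- In a connected labeled digraph, any equivalence relation contained in a group-preserving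
equivalence relation is itself group-preserving. -/
theorem groupPreserving_of_le {V A : Type*} (G : LDigraph V A) (hG : G.Connected)
    (r₁ r₂ : Setoid V) (hsub : ∀ x y : V, r₂.r x y → r₁.r x y)
    (h₁ : G.GroupPreserving r₁) : G.GroupPreserving r₂ :=
  groupPreserving_of_le_general G r₁ r₂ hsub h₁
end

section
/- Let L be a recurrent language on A containing A, with every word of L ∩ A^{m-1} connected (its extension graph is connected), where m ≥ 1. Then for 1 ≤ k ≤ m, the equivalence relation ker(tail) on the vertices of the Rauzy graph G_{m,k} (identifying words of L ∩ A^m with the same tail) is group-preserving. -/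
open List

/-!
Ker(tail) only identifies vertices `a w` and `b w` of `G_{m,k}` with a common tail `w`. Every edge
`c w → w d` of the Rauzy graph comes from an edge `c — d` of the extension graph `E(w)` and carries
the label `(w d)(k)`, which depends on `d` alone. So along a walk in `E(w)` the label of the
corresponding path in `G_{m,k}` telescopes, and connectivity of `E(w)` joins `a w` to `b w` by a path
of trivial label. Such paths let every loop of the quotient be lifted to a loop of `G_{m,k}` with the
same label.
-/

namespace LDigraph

variable {V A : Type*} {G : LDigraph V A}

theorem PathLabel.trans {x y z : V} {g h : FreeGroup A}
    (p : G.PathLabel x y g) (q : G.PathLabel y z h) : G.PathLabel x z (g * h) := by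
  induction p with
  | nil => simpa using q
  | cons s _ ih => rw [mul_assoc]; exact .cons s (ih q)

theorem Step.quot (r : Setoid V) {x y : V} {g : FreeGroup A} (s : G.Step x y g) :
    (G.quot r).Step (Quotient.mk r x) (Quotient.mk r y) g := by
  cases s with
  | fwd h => exact .fwd ⟨_, _, _, h, rfl⟩
  | bwd h => exact .bwd ⟨_, _, _, h, rfl⟩

theorem PathLabel.quot (r : Setoid V) {x y : V} {g : FreeGroup A} (p : G.PathLabel x y g) :
    (G.quot r).PathLabel (Quotient.mk r x) (Quotient.mk r y) g := by
  induction p with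
  | nil => exact .nil _
  | cons s _ ih => exact .cons (s.quot r) ih

theorem Step.exists_of_quot {r : Setoid V} {p q : Quotient r} {g : FreeGroup A}
    (s : (G.quot r).Step p q g) :
    ∃ x y, p = Quotient.mk r x ∧ q = Quotient.mk r y ∧ G.Step x y g := by
  cases s with
  | fwd h =>
    obtain ⟨x, a, y, hE, he⟩ := h
    simp only [Prod.mk.injEq] at he
    obtain ⟨rfl, rfl, rfl⟩ := he
    exact ⟨x, y, rfl, rfl, .fwd hE⟩
  | bwd h =>
    obtain ⟨x, a, y, hE, he⟩ := h
    simp only [Prod.mk.injEq] at he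
    obtain ⟨rfl, rfl, rfl⟩ := he
    exact ⟨y, x, rfl, rfl, .bwd hE⟩

theorem PathLabel.of_quot {r : Setoid V} (hr : ∀ x y, r.r x y → G.PathLabel x y 1)
    {x y : V} {g : FreeGroup A}
    (P : (G.quot r).PathLabel (Quotient.mk r x) (Quotient.mk r y) g) : G.PathLabel x y g := by
  generalize hp : Quotient.mk r x = p at P
  generalize hq : Quotient.mk r y = q at P
  induction P generalizing x with
  | nil => simpa using hr x y (Quotient.exact (hp.trans hq.symm))
  | cons s _ ih =>
    obtain ⟨x', y', rfl, rfl, s'⟩ := s.exists_of_quot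
    simpa using (hr x x' (Quotient.exact hp)).trans (.cons s' (ih rfl hq))

theorem groupPreserving_of_pathLabel_one {r : Setoid V}
    (hr : ∀ x y, r.r x y → G.PathLabel x y 1) : G.GroupPreserving r :=
  fun _ => Set.ext fun _ => ⟨PathLabel.quot r, PathLabel.of_quot hr⟩

end LDigraph

section Rauzy

variable {A : Type*} {L : Set (List A)}

def extVertexWord (w : List A) : A ⊕ A → List A :=
  Sum.elim (fun c => c :: w) (fun d => w ++ [d])

/-- A potential on `E(w)` whose differences are the labels of the corresponding Rauzy edges. -/
def extPotential (w : List A) (k : ℕ) : A ⊕ A → FreeGroup A :=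
  Sum.elim (fun _ => 1) (fun d => (FreeGroup.of ((w ++ [d]).getD k d))⁻¹)

theorem mem_rauzy_of_extGraph_adj {w : List A} {k : ℕ} (hk : k ≤ w.length) {c d : A}
    (hcd : c :: (w ++ [d]) ∈ L) :
    (c :: w, (w ++ [d]).getD k d, w ++ [d]) ∈ (rauzy L (w.length + 1) (k + 1)).E := by
  have hk' : k < (w ++ [d]).length := by simp; omega
  refine ⟨c :: (w ++ [d]), (w ++ [d]).getD k d, hcd, by simp, ?_, ?_⟩
  · simp [List.getElem?_eq_getElem hk']
  · rw [← List.cons_append, List.dropLast_concat]; rfl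

theorem rauzy_pathLabel_of_walk {w : List A} {k : ℕ} (hk : k ≤ w.length) {p q : A ⊕ A}
    (W : (extGraph L w).Walk p q) :
    (rauzy L (w.length + 1) (k + 1)).PathLabel (extVertexWord w p) (extVertexWord w q)
      (extPotential w k p * (extPotential w k q)⁻¹) := by
  induction W with
  | nil => simpa using LDigraph.PathLabel.nil _
  | cons hadj _ ih =>
    obtain ⟨c, d, hcd, ⟨rfl, rfl⟩ | ⟨rfl, rfl⟩⟩ := hadj
    · simpa [extVertexWord, extPotential, mul_assoc] using
        LDigraph.PathLabel.cons (.fwd (mem_rauzy_of_extGraph_adj hk hcd)) ih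
    · simpa [extVertexWord, extPotential, mul_assoc] using
        LDigraph.PathLabel.cons (.bwd (mem_rauzy_of_extGraph_adj hk hcd)) ih

theorem rauzy_pathLabel_one_of_extConnected {w : List A} {k : ℕ} (hk : k ≤ w.length)
    (hconn : ExtConnected L w) {a b : A} (ha : a :: w ∈ L) (hb : b :: w ∈ L) :
    (rauzy L (w.length + 1) (k + 1)).PathLabel (a :: w) (b :: w) 1 := by
  obtain ⟨W⟩ := hconn (.inl a) ha (.inl b) hb
  simpa [extVertexWord, extPotential] using rauzy_pathLabel_of_walk hk W

theorem rauzy_pathLabel_one_of_tail_eq (hL : FactorClosed L) {m k : ℕ}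
    (hconn : ∀ w ∈ L, w.length = m - 1 → ExtConnected L w) (hk1 : 1 ≤ k) (hk2 : k ≤ m)
    {x y : List A} (hx : x ∈ L) (hxl : x.length = m) (hy : y ∈ L) (hyl : y.length = m)
    (ht : x.tail = y.tail) : (rauzy L m k).PathLabel x y 1 := by
  obtain ⟨k, rfl⟩ := Nat.exists_eq_add_of_le' hk1
  obtain ⟨a, w, rfl⟩ := List.exists_cons_of_length_pos (by omega : 0 < x.length)
  obtain ⟨b, w', rfl⟩ := List.exists_cons_of_length_pos (by omega : 0 < y.length)
  obtain rfl : w = w' := ht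
  obtain rfl : m = w.length + 1 := hxl.symm
  have hw : w ∈ L := hL _ hx w (List.infix_cons List.infix_rfl)
  exact rauzy_pathLabel_one_of_extConnected (by omega) (hconn w hw (by simp)) hx hy

end Rauzy

theorem kerTail_groupPreserving_general {A : Type*} (L : Set (List A)) (hrec : Recurrent L)
    (m : ℕ)
    (hconn : ∀ w ∈ L, w.length = m - 1 → ExtConnected L w)
    (k : ℕ) (hk1 : 1 ≤ k) (hk2 : k ≤ m)
    (r : Setoid (List A))
    (hr : ∀ x y : List A, r.r x y ↔
      (x = y ∨ (x ∈ L ∧ x.length = m ∧ y ∈ L ∧ y.length = m ∧ x.tail = y.tail))) :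
    (rauzy L m k).GroupPreserving r := by
  refine LDigraph.groupPreserving_of_pathLabel_one fun x y hxy => ?_
  rcases (hr x y).1 hxy with rfl | ⟨hx, hxl, hy, hyl, ht⟩
  · exact .nil x
  · exact rauzy_pathLabel_one_of_tail_eq hrec.1 hconn hk1 hk2 hx hxl hy hyl ht

/-- If every word of `L` of length `m-1` has a connected extension graph, then for
`1 ≤ k ≤ m`, the relation `ker(tail)` on the vertices of the Rauzy graph `G_{m,k}` is
group-preserving. -/
theorem kerTail_groupPreserving {A : Type*} (L : Set (List A)) (hrec : Recurrent L)
    (hA : ∀ a : A, [a] ∈ L) (m : ℕ) (hm : 1 ≤ m)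
    (hconn : ∀ w ∈ L, w.length = m - 1 → ExtConnected L w)
    (k : ℕ) (hk1 : 1 ≤ k) (hk2 : k ≤ m)
    (r : Setoid (List A))
    (hr : ∀ x y : List A, r.r x y ↔
      (x = y ∨ (x ∈ L ∧ x.length = m ∧ y ∈ L ∧ y.length = m ∧ x.tail = y.tail))) :
    (rauzy L m k).GroupPreserving r :=
  kerTail_groupPreserving_general L hrec m hconn k hk1 hk2 r hr
end

section
/- Let φ be the substitution 0 ↦ 0001, 1 ↦ 02, 2 ↦ 001 on A = {0,1,2}, and define x_k = init(φ^k(2)). Then for all k: x_{k+1} = φ(x_k)00 if k is even and x_{k+1} = φ(x_k)0 if k is odd; moreover x_k·0 is a prefix of φ^k(0). -/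
/-- The substitution `0 ↦ 0001, 1 ↦ 02, 2 ↦ 001` on the alphabet `{0,1,2}`. -/
def phiSub : Fin 3 → List (Fin 3) := ![[0, 0, 0, 1], [0, 2], [0, 0, 1]]

/-- The substitution extended to words. -/
def phi (w : List (Fin 3)) : List (Fin 3) := w.flatMap phiSub

/-- `x_k = init (φ^k(2))`. -/
def xk (k : ℕ) : List (Fin 3) := (phi^[k] [2]).dropLast

/-! Since `φ(2) = 001` and `φ(1) = 02`, the last letter of `φ^k(2)` alternates between `2` and
`1`, and deleting it from `φ(x_k c)` leaves `φ(x_k)00` when `c = 2` and `φ(x_k)0` when `c = 1`.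
The prefix claim follows because `φ` preserves prefixes and `x_{k+1}0` is a prefix of
`φ(x_k 0) = φ(x_k)0001`. -/

theorem phi_append (a b : List (Fin 3)) : phi (a ++ b) = phi a ++ phi b :=
  List.flatMap_append

theorem List.IsPrefix.phi {a b : List (Fin 3)} (h : a <+: b) : phi a <+: phi b :=
  h.flatMap phiSub

theorem phi_iterate_two (k : ℕ) : phi^[k] [2] = xk k ++ [if Even k then 2 else 1] := by
  induction k with
  | zero => rfl
  | succ k ih =>
    rw [xk, Function.iterate_succ_apply', ih, phi_append]
    by_cases hk : Even k <;> simp [hk, Nat.even_add_one, phi, phiSub]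

theorem xk_succ (k : ℕ) : xk (k + 1) = phi (xk k) ++ if Even k then [0, 0] else [0] := by
  rw [xk, Function.iterate_succ_apply', phi_iterate_two, phi_append]
  by_cases hk : Even k <;> simp [hk, phi, phiSub]

theorem xk_succ_append_zero_prefix (k : ℕ) : xk (k + 1) ++ [0] <+: phi (xk k ++ [0]) := by
  rw [xk_succ, phi_append, List.append_assoc]
  refine List.prefix_append_right_inj _ |>.mpr ?_
  by_cases hk : Even k <;> simp [hk, phi, phiSub]

/-- For all `k`: `x_{k+1} = φ(x_k)00` if `k` is even, `x_{k+1} = φ(x_k)0` if `k` is odd;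
moreover `x_k·0` is a prefix of `φ^k(0)`. -/
theorem xk_rec_and_prefix (k : ℕ) :
    ((Even k → xk (k + 1) = phi (xk k) ++ [0, 0]) ∧
      (Odd k → xk (k + 1) = phi (xk k) ++ [0])) ∧
    (xk k ++ [0]) <+: phi^[k] [0] := by
  refine ⟨⟨fun hk => by simp [xk_succ, hk], fun hk => by simp [xk_succ, Nat.not_even_iff_odd.2 hk]⟩,
    ?_⟩
  induction k with
  | zero => rfl
  | succ k ih =>
    rw [Function.iterate_succ_apply']
    exact (xk_succ_append_zero_prefix k).trans ih.phi
end

section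
/- Let L be the language of factors of the primitive substitution φ: 0 ↦ 0001, 1 ↦ 02, 2 ↦ 001. Every right special factor of L of length at least 2 either ends with 00 and has right extensions exactly {0,1}, or ends with 10 and has right extensions exactly {0,2}; dually, every left special factor of length at least 3 either starts with 000 and has left extensions exactly {1,2}, or starts with 001 and has left extensions exactly {0,1}. -/
/-- The language of the substitution: nonempty factors of the words `φ^n(a)`. -/
def Lphi : Set (List (Fin 3)) :=
  {w | w ≠ [] ∧ ∃ (n : ℕ) (a : Fin 3), w <:+: phi^[n] [a]}

namespace List

variable {α β : Type*} {f : α → List β}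

theorem length_le_length_flatMap (hf : ∀ a, f a ≠ []) (l : List α) :
    l.length ≤ (l.flatMap f).length := by
  induction l with
  | nil => simp
  | cons a l ih =>
    have := length_pos_iff.2 (hf a)
    simp only [flatMap_cons, length_cons, length_append]
    omega

theorem IsPrefix.prefix_flatMap_take (hf : ∀ a, f a ≠ []) {v : List β} {w : List α}
    (h : v <+: w.flatMap f) : v <+: (w.take v.length).flatMap f := by
  by_cases hk : v.length ≤ w.length
  · rw [← take_append_drop v.length w, flatMap_append] at h
    refine prefix_of_prefix_length_le h (prefix_append _ _) ?_
    calc v.length = (w.take v.length).length := by simp [hk]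
      _ ≤ _ := length_le_length_flatMap hf _
  · rwa [take_of_length_le (by omega)]

theorem IsInfix.exists_infix_flatMap (hf : ∀ a, f a ≠ []) {v : List β} {w : List α}
    (h : v <:+: w.flatMap f) :
    ∃ u, u <:+: w ∧ u.length ≤ v.length ∧ v <:+: u.flatMap f := by
  induction w with
  | nil => exact ⟨[], infix_refl _, by simp, h⟩
  | cons a w ih =>
    rcases eq_or_ne v [] with rfl | hv
    · exact ⟨[], nil_infix, le_rfl, nil_infix⟩
    rw [flatMap_cons, infix_append_iff_ne_nil] at h
    rcases h with h | h | ⟨v₁, v₂, hv₁, -, rfl, h₁, h₂⟩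
    · exact ⟨[a], (singleton_infix_iff _ _).2 mem_cons_self, length_pos_iff.2 hv,
        by simpa using h⟩
    · obtain ⟨u, hu, hlen, hvu⟩ := ih h
      exact ⟨u, hu.trans (infix_cons (infix_refl w)), hlen, hvu⟩
    · refine ⟨a :: w.take v₂.length, ((prefix_cons_inj a).2 (take_prefix _ _)).isInfix,
        ?_, ?_⟩
      · have := length_pos_iff.2 hv₁
        simp only [length_cons, length_append]
        have := length_take_le v₂.length w
        omega
      · rw [flatMap_cons, infix_append_iff]
        exact Or.inr (Or.inr ⟨v₁, v₂, rfl, h₁, h₂.prefix_flatMap_take hf⟩)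

end List

theorem Set.eq_pair_of_subset_of_ne {α : Type*} {s : Set α} {x y b c : α} (hs : s ⊆ {x, y})
    (hb : b ∈ s) (hc : c ∈ s) (hbc : b ≠ c) : s = {x, y} := by
  have hb' := hs hb
  have hc' := hs hc
  simp only [Set.mem_insert_iff, Set.mem_singleton_iff] at hb' hc'
  refine hs.antisymm (Set.insert_subset_iff.2 ⟨?_, Set.singleton_subset_iff.2 ?_⟩) <;>
    rcases hb' with rfl | rfl <;> rcases hc' with rfl | rfl <;>
    first | assumption | exact absurd rfl hbc

theorem phiSub_ne_nil (a : Fin 3) : phiSub a ≠ [] := by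
  fin_cases a <;> simp [phiSub]

theorem mem_Lphi_of_infix {v w : List (Fin 3)} (hw : w ∈ Lphi) (hv : v <:+: w) (hne : v ≠ []) :
    v ∈ Lphi :=
  ⟨hne, hw.2.imp fun _ ↦ .imp fun _ ↦ hv.trans⟩

theorem rightExtensions_subset {u w : List (Fin 3)} (h : u <:+ w) :
    {d | w ++ [d] ∈ Lphi} ⊆ {d | u ++ [d] ∈ Lphi} := fun _ hd ↦
  mem_Lphi_of_infix hd (List.suffix_append_self_iff.2 h).isInfix (by simp)

theorem leftExtensions_subset {u w : List (Fin 3)} (h : u <+: w) :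
    {d | d :: w ∈ Lphi} ⊆ {d | d :: u ∈ Lphi} := fun d hd ↦
  mem_Lphi_of_infix hd ((List.prefix_cons_inj d).2 h).isInfix (by simp)

/-- The factors of length at most `4` of `Lphi` (`mem_Lphi_iff_mem_shortFactors`). -/
def shortFactors : List (List (Fin 3)) :=
  [[0], [1], [2], [0, 0], [0, 1], [0, 2], [1, 0], [2, 0],
   [0, 0, 0], [0, 0, 1], [0, 1, 0], [0, 2, 0], [1, 0, 0], [1, 0, 2], [2, 0, 0],
   [0, 0, 0, 1], [0, 0, 1, 0], [0, 1, 0, 0], [0, 1, 0, 2], [0, 2, 0, 0], [1, 0, 0, 0],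
   [1, 0, 0, 1], [1, 0, 2, 0], [2, 0, 0, 0]]

theorem mem_Lphi_of_mem_shortFactors {v : List (Fin 3)} (hv : v ∈ shortFactors) : v ∈ Lphi := by
  have h : ∀ v ∈ shortFactors, v ≠ [] ∧ v <:+: phi^[4] [0] := by decide
  exact ⟨(h v hv).1, 4, 0, (h v hv).2⟩

theorem shortFactors_closed_phi : ∀ u ∈ shortFactors, ∀ t ∈ (phi u).tails, t ≠ [] →
    ∀ k ∈ [1, 2, 3, 4], t.take k ∈ shortFactors := by
  decide

def ShortFactorsIn (x : List (Fin 3)) : Prop :=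
  ∀ v, v <:+: x → v ≠ [] → v.length ≤ 4 → v ∈ shortFactors

theorem mem_shortFactors_of_infix_phi {u v : List (Fin 3)} (hu : u ∈ shortFactors)
    (hv : v <:+: phi u) (hne : v ≠ []) (hlen : v.length ≤ 4) : v ∈ shortFactors := by
  obtain ⟨t, hvt, ht⟩ := List.infix_iff_prefix_suffix.1 hv
  have hk : v.length ∈ [1, 2, 3, 4] := by
    have := List.length_pos_iff.2 hne
    simp only [List.mem_cons, List.not_mem_nil, or_false]
    omega
  rw [List.prefix_iff_eq_take.1 hvt]
  refine shortFactors_closed_phi u hu t ((List.mem_tails _ _).2 ht) ?_ _ hk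
  rintro rfl
  exact hne (List.prefix_nil.1 hvt)

theorem ShortFactorsIn.phi {x : List (Fin 3)} (hx : ShortFactorsIn x) :
    ShortFactorsIn (phi x) := by
  intro v hv hne hlen
  obtain ⟨u, hux, hlu, hvu⟩ := hv.exists_infix_flatMap phiSub_ne_nil
  have hune : u ≠ [] := by
    rintro rfl
    exact hne (List.infix_nil.1 hvu)
  exact mem_shortFactors_of_infix_phi (hx u hux hune (hlu.trans hlen)) hvu hne hlen

theorem shortFactorsIn_singleton (a : Fin 3) : ShortFactorsIn [a] := by
  intro v hv hne _
  rw [(List.infix_singleton_iff v a).1 hv |>.resolve_left hne]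
  fin_cases a <;> decide

theorem shortFactorsIn_phi_iterate (n : ℕ) (a : Fin 3) : ShortFactorsIn (phi^[n] [a]) := by
  induction n with
  | zero => exact shortFactorsIn_singleton a
  | succ n ih => exact Function.iterate_succ_apply' phi n [a] ▸ ih.phi

theorem mem_Lphi_iff_mem_shortFactors {v : List (Fin 3)} (hlen : v.length ≤ 4) :
    v ∈ Lphi ↔ v ∈ shortFactors :=
  ⟨fun ⟨hne, n, a, hv⟩ ↦ shortFactorsIn_phi_iterate n a v hv hne hlen,
    mem_Lphi_of_mem_shortFactors⟩

theorem shortFactors_rightSpecial :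
    ∀ u ∈ shortFactors, u.length = 2 → ∀ b c : Fin 3, b ≠ c →
    u ++ [b] ∈ shortFactors → u ++ [c] ∈ shortFactors →
      (u = [0, 0] ∧ ∀ d : Fin 3, u ++ [d] ∈ shortFactors → d = 0 ∨ d = 1) ∨
        (u = [1, 0] ∧ ∀ d : Fin 3, u ++ [d] ∈ shortFactors → d = 0 ∨ d = 2) := by
  decide

theorem shortFactors_leftSpecial :
    ∀ u ∈ shortFactors, u.length = 3 → ∀ b c : Fin 3, b ≠ c →
    b :: u ∈ shortFactors → c :: u ∈ shortFactors →
      (u = [0, 0, 0] ∧ ∀ d : Fin 3, d :: u ∈ shortFactors → d = 1 ∨ d = 2) ∨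
        (u = [0, 0, 1] ∧ ∀ d : Fin 3, d :: u ∈ shortFactors → d = 0 ∨ d = 1) := by
  decide

theorem rightSpecial_of_length_eq_two {u : List (Fin 3)} (hu : u.length = 2) {b c : Fin 3}
    (hbc : b ≠ c) (hb : u ++ [b] ∈ Lphi) (hc : u ++ [c] ∈ Lphi) :
    (u = [0, 0] ∧ {d | u ++ [d] ∈ Lphi} ⊆ {0, 1}) ∨
      (u = [1, 0] ∧ {d | u ++ [d] ∈ Lphi} ⊆ {0, 2}) := by
  have short (d : Fin 3) : u ++ [d] ∈ Lphi ↔ u ++ [d] ∈ shortFactors :=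
    mem_Lphi_iff_mem_shortFactors (by simp [hu])
  have hu' : u ∈ shortFactors := (mem_Lphi_iff_mem_shortFactors (by omega)).1
    (mem_Lphi_of_infix hb List.infix_append_left (List.ne_nil_of_length_pos (by omega)))
  rcases shortFactors_rightSpecial u hu' hu b c hbc ((short b).1 hb) ((short c).1 hc) with
    ⟨rfl, h⟩ | ⟨rfl, h⟩
  · exact .inl ⟨rfl, fun d hd ↦ h d ((short d).1 hd)⟩
  · exact .inr ⟨rfl, fun d hd ↦ h d ((short d).1 hd)⟩

theorem leftSpecial_of_length_eq_three {u : List (Fin 3)} (hu : u.length = 3) {b c : Fin 3}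
    (hbc : b ≠ c) (hb : b :: u ∈ Lphi) (hc : c :: u ∈ Lphi) :
    (u = [0, 0, 0] ∧ {d | d :: u ∈ Lphi} ⊆ {1, 2}) ∨
      (u = [0, 0, 1] ∧ {d | d :: u ∈ Lphi} ⊆ {0, 1}) := by
  have short (d : Fin 3) : d :: u ∈ Lphi ↔ d :: u ∈ shortFactors :=
    mem_Lphi_iff_mem_shortFactors (by simp [hu])
  have hu' : u ∈ shortFactors := (mem_Lphi_iff_mem_shortFactors (by omega)).1
    (mem_Lphi_of_infix hb (List.suffix_cons b u).isInfix (List.ne_nil_of_length_pos (by omega)))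
  rcases shortFactors_leftSpecial u hu' hu b c hbc ((short b).1 hb) ((short c).1 hc) with
    ⟨rfl, h⟩ | ⟨rfl, h⟩
  · exact .inl ⟨rfl, fun d hd ↦ h d ((short d).1 hd)⟩
  · exact .inr ⟨rfl, fun d hd ↦ h d ((short d).1 hd)⟩

theorem rightSpecial_classification {w : List (Fin 3)} (hw : 2 ≤ w.length) {b c : Fin 3}
    (hbc : b ≠ c) (hb : w ++ [b] ∈ Lphi) (hc : w ++ [c] ∈ Lphi) :
    ([0, 0] <:+ w ∧ {d | w ++ [d] ∈ Lphi} = {0, 1}) ∨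
      ([1, 0] <:+ w ∧ {d | w ++ [d] ∈ Lphi} = {0, 2}) := by
  have hsuf : w.drop (w.length - 2) <:+ w := List.drop_suffix _ _
  have hext := rightExtensions_subset hsuf
  rcases rightSpecial_of_length_eq_two (by rw [List.length_drop]; omega) hbc
      (hext hb) (hext hc) with ⟨hu, hsub⟩ | ⟨hu, hsub⟩ <;> rw [hu] at hsuf
  · exact .inl ⟨hsuf, Set.eq_pair_of_subset_of_ne (hext.trans hsub) hb hc hbc⟩
  · exact .inr ⟨hsuf, Set.eq_pair_of_subset_of_ne (hext.trans hsub) hb hc hbc⟩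

theorem leftSpecial_classification {w : List (Fin 3)} (hw : 3 ≤ w.length) {b c : Fin 3}
    (hbc : b ≠ c) (hb : b :: w ∈ Lphi) (hc : c :: w ∈ Lphi) :
    ([0, 0, 0] <+: w ∧ {d | d :: w ∈ Lphi} = {1, 2}) ∨
      ([0, 0, 1] <+: w ∧ {d | d :: w ∈ Lphi} = {0, 1}) := by
  have hpre : w.take 3 <+: w := List.take_prefix _ _
  have hext := leftExtensions_subset hpre
  rcases leftSpecial_of_length_eq_three (by rw [List.length_take]; omega) hbc
      (hext hb) (hext hc) with ⟨hu, hsub⟩ | ⟨hu, hsub⟩ <;> rw [hu] at hpre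
  · exact .inl ⟨hpre, Set.eq_pair_of_subset_of_ne (hext.trans hsub) hb hc hbc⟩
  · exact .inr ⟨hpre, Set.eq_pair_of_subset_of_ne (hext.trans hsub) hb hc hbc⟩

/-- Every right special factor of length ≥ 2 of the language of
`0 ↦ 0001, 1 ↦ 02, 2 ↦ 001` either ends with `00` and has right extensions `{0,1}`,
or ends with `10` and has right extensions `{0,2}`; dually, every left special factor of
length ≥ 3 either starts with `000` and has left extensions `{1,2}`, or starts with `001`
and has left extensions `{0,1}`. -/
theorem special_factors_classification :
    (∀ w ∈ Lphi, 2 ≤ w.length →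
      (∃ b c : Fin 3, b ≠ c ∧ w ++ [b] ∈ Lphi ∧ w ++ [c] ∈ Lphi) →
      (([0, 0] <:+ w ∧ {b : Fin 3 | w ++ [b] ∈ Lphi} = {0, 1}) ∨
        ([1, 0] <:+ w ∧ {b : Fin 3 | w ++ [b] ∈ Lphi} = {0, 2}))) ∧
    (∀ w ∈ Lphi, 3 ≤ w.length →
      (∃ b c : Fin 3, b ≠ c ∧ b :: w ∈ Lphi ∧ c :: w ∈ Lphi) →
      (([0, 0, 0] <+: w ∧ {a : Fin 3 | a :: w ∈ Lphi} = {1, 2}) ∨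
        ([0, 0, 1] <+: w ∧ {a : Fin 3 | a :: w ∈ Lphi} = {0, 1}))) :=
  ⟨fun _ _ hw ⟨_, _, hbc, hb, hc⟩ ↦ rightSpecial_classification hw hbc hb hc,
    fun _ _ hw ⟨_, _, hbc, hb, hc⟩ ↦ leftSpecial_classification hw hbc hb hc⟩
end
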